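/- Let L > 0, let k, Λ, m₁, m₂, m₃, n₁, n₂, n₃ be real numbers, and let R be an invertible 3×3 complex matrix. Define N(x,t) = k·x − Λ·t, P(x,t) = diag(1, exp(−i·N(x,t)), 1), E(x,t) = diag(exp(i·(m₁·x + n₁·t)), exp(i·(m₂·x + n₂·t)), exp(i·(m₃·x + n₃·t))), 𝖩 = diag((1/3)·i, −(2/3)·i, (1/3)·i), and F̂(x,t) := (P(x,t)·R·E(x,t))†·exp(N(x,t)·𝖩), where † denotes conjugate transpose. Then for ω ∈ ℂ with |ω| = 1, the quasi-periodicity F̂(x + L, t) = ω·F̂(x, t) holds for all (x, t) ∈ ℝ × ℝ if and only if exp(i·m_j·L) = conj(ω)·exp(i·k·L/3) for j = 1, 2, 3. -/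

import Mathlib

/-!
Since `N` is real, the gauge factor `P†` cancels the traceless part of `exp(N𝖩)`, leaving
`F̂ = exp(iN/3) • (R E)†`. Shifting `x` by `L` multiplies `E` on the right by `D = diag(exp(i mⱼ L))`
and the scalar by `exp(ikL/3)`, so `F̂(x + L, t) = (exp(ikL/3) • D†) F̂(x, t)`. As `F̂(x, t)` is
invertible, quasi-periodicity says exactly that `exp(ikL/3) • D† = ω`, which is read off entrywise
using `|exp(ikL/3)| = 1`.
-/

open Complex Matrix

noncomputable section

/-- The diagonal matrix `𝖩 = diag(i/3, −2i/3, i/3)`. -/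
def matJ : Matrix (Fin 3) (Fin 3) ℂ :=
  Matrix.diagonal ![(1/3) * Complex.I, -(2/3) * Complex.I, (1/3) * Complex.I]

open scoped ComplexConjugate

theorem IsUnit.smul_of_ne_zero {K M : Type*} [GroupWithZero K] [Monoid M] [MulAction K M]
    [SMulCommClass K M M] [IsScalarTower K M M] {c : K} (hc : c ≠ 0) {m : M} (hm : IsUnit m) :
    IsUnit (c • m) := by
  simpa [Units.smul_def] using hm.smul (Units.mk0 c hc)

theorem Matrix.mul_eq_smul_iff_of_isUnit {n R : Type*} [Fintype n] [DecidableEq n] [CommRing R]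
    {M : Matrix n n R} (hM : IsUnit M) (A : Matrix n n R) (c : R) :
    A * M = c • M ↔ A = c • 1 := by
  rw [← smul_one_mul c M, hM.mul_left_inj]

theorem Complex.mul_conj_eq_iff_eq_conj_mul {u : ℂ} (hu : ‖u‖ = 1) (v ω : ℂ) :
    u * conj v = ω ↔ v = conj ω * u := by
  have hu' : conj u * u = 1 := by rw [conj_mul', hu]; norm_num
  constructor
  · rintro rfl
    simp only [map_mul, conj_conj]
    linear_combination (-v) * hu'
  · rintro rfl
    simp only [map_mul, conj_conj]
    linear_combination ω * hu'

theorem conjTranspose_diagonal_mul_exp_smul_matJ (n : ℝ) :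
    (diagonal ![1, exp (-I * n), 1])ᴴ * NormedSpace.exp ((n : ℂ) • matJ) =
      exp (I * n / 3) • 1 := by
  rw [matJ, ← diagonal_smul, exp_diagonal, diagonal_conjTranspose, diagonal_mul_diagonal,
    smul_one_eq_diagonal]
  congr 1
  funext i
  rw [Pi.exp_def, ← exp_eq_exp_ℂ]
  fin_cases i <;> simp [← exp_conj, ← exp_add] <;> ring_nf

theorem conjTranspose_mul_exp_smul_matJ (n : ℝ) (R E : Matrix (Fin 3) (Fin 3) ℂ) :
    (diagonal ![1, exp (-I * n), 1] * R * E)ᴴ * NormedSpace.exp ((n : ℂ) • matJ) =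
      exp (I * n / 3) • (Eᴴ * Rᴴ) := by
  rw [conjTranspose_mul, conjTranspose_mul, mul_assoc, mul_assoc,
    conjTranspose_diagonal_mul_exp_smul_matJ, mul_smul_comm, mul_smul_comm, mul_one]

theorem quasiPeriodicity_iff_closure_general (L : ℝ)
    (k Λ : ℝ) (ms ns : Fin 3 → ℝ)
    (R : Matrix (Fin 3) (Fin 3) ℂ) (hR : IsUnit R)
    (N : ℝ × ℝ → ℝ) (hN : N = fun p => k * p.1 - Λ * p.2)
    (P : ℝ × ℝ → Matrix (Fin 3) (Fin 3) ℂ)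
    (hP : P = fun p => Matrix.diagonal ![1, Complex.exp (-Complex.I * (N p : ℂ)), 1])
    (E : ℝ × ℝ → Matrix (Fin 3) (Fin 3) ℂ)
    (hE : E = fun p => Matrix.diagonal fun j =>
      Complex.exp (Complex.I * ((ms j : ℂ) * p.1 + (ns j : ℂ) * p.2)))
    (Fhat : ℝ × ℝ → Matrix (Fin 3) (Fin 3) ℂ)
    (hFhat : Fhat = fun p => (P p * R * E p)ᴴ * NormedSpace.exp (((N p : ℂ)) • matJ))
    (ω : ℂ) :
    ((∀ p : ℝ × ℝ, Fhat (p.1 + L, p.2) = ω • Fhat p)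
      ↔ (∀ j : Fin 3, Complex.exp (Complex.I * (ms j : ℂ) * (L : ℂ))
            = (starRingEnd ℂ) ω * Complex.exp (Complex.I * (k : ℂ) * (L : ℂ) / 3))) := by
  set e := exp (I * k * L / 3)
  set D : Matrix (Fin 3) (Fin 3) ℂ := diagonal fun j => exp (I * ms j * L)
  have hF (p : ℝ × ℝ) : Fhat p = exp (I * N p / 3) • ((E p)ᴴ * Rᴴ) := by
    rw [hFhat, hP]
    exact conjTranspose_mul_exp_smul_matJ _ _ _
  have hE_shift (p : ℝ × ℝ) : E (p.1 + L, p.2) = E p * D := by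
    simp only [hE, D, diagonal_mul_diagonal, ← exp_add]
    congr! 3
    push_cast
    ring
  have hF_shift (p : ℝ × ℝ) : Fhat (p.1 + L, p.2) = (e • Dᴴ) * Fhat p := by
    have hN_shift : (N (p.1 + L, p.2) : ℂ) = N p + k * L := by rw [hN]; push_cast; ring
    rw [hF, hF, hE_shift, hN_shift, conjTranspose_mul, smul_mul_smul_comm, ← mul_assoc,
      ← exp_add]
    ring_nf
  have hF_unit (p : ℝ × ℝ) : IsUnit (Fhat p) := by
    have hE_unit : IsUnit (E p) := by
      rw [hE]
      exact isUnit_diagonal.mpr (Pi.isUnit_iff.mpr fun j => (exp_ne_zero _).isUnit)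
    rw [hF]
    exact IsUnit.smul_of_ne_zero (exp_ne_zero _)
      (((isUnit_conjTranspose _).mpr hE_unit).mul ((isUnit_conjTranspose R).mpr hR))
  have hD : e • Dᴴ = ω • 1 ↔ ∀ j, exp (I * ms j * L) = conj ω * e := by
    rw [diagonal_conjTranspose, ← diagonal_smul, smul_one_eq_diagonal, diagonal_injective.eq_iff,
      funext_iff]
    refine forall_congr' fun j => mul_conj_eq_iff_eq_conj_mul ?_ _ _
    simpa [e, mul_assoc, mul_div_assoc] using norm_exp_I_mul_ofReal (k * L / 3)
  simp_rw [hF_shift, mul_eq_smul_iff_of_isUnit (hF_unit _), forall_const, hD]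

/-- Quasi-periodicity of the local frame `F̂ = (P·R·E)†·exp(N·𝖩)` with factor `ω`
is equivalent to the closure condition `exp(i·mⱼ·L) = conj(ω)·exp(i·k·L/3)`. -/
theorem quasiPeriodicity_iff_closure (L : ℝ) (hL : 0 < L)
    (k Λ : ℝ) (ms ns : Fin 3 → ℝ)
    (R : Matrix (Fin 3) (Fin 3) ℂ) (hR : IsUnit R)
    (N : ℝ × ℝ → ℝ) (hN : N = fun p => k * p.1 - Λ * p.2)
    (P : ℝ × ℝ → Matrix (Fin 3) (Fin 3) ℂ)
    (hP : P = fun p => Matrix.diagonal ![1, Complex.exp (-Complex.I * (N p : ℂ)), 1])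
    (E : ℝ × ℝ → Matrix (Fin 3) (Fin 3) ℂ)
    (hE : E = fun p => Matrix.diagonal fun j =>
      Complex.exp (Complex.I * ((ms j : ℂ) * p.1 + (ns j : ℂ) * p.2)))
    (Fhat : ℝ × ℝ → Matrix (Fin 3) (Fin 3) ℂ)
    (hFhat : Fhat = fun p => (P p * R * E p)ᴴ * NormedSpace.exp (((N p : ℂ)) • matJ))
    (ω : ℂ) (hω : ‖ω‖ = 1) :
    ((∀ p : ℝ × ℝ, Fhat (p.1 + L, p.2) = ω • Fhat p)
      ↔ (∀ j : Fin 3, Complex.exp (Complex.I * (ms j : ℂ) * (L : ℂ))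
            = (starRingEnd ℂ) ω * Complex.exp (Complex.I * (k : ℂ) * (L : ℂ) / 3))) :=
  quasiPeriodicity_iff_closure_general L k Λ ms ns R hR N hN P hP E hE Fhat hFhat ω

end
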